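/- Let y ∈ ℝⁿ with y ≠ 0, x ∈ ℝᵐ, and W an m×m positive semidefinite real matrix with W x ≠ 0. Then the matrix Â = (‖y‖₂ / √(xᵀ W x)) · x xᵀ is positive semidefinite, satisfies x ∈ range(Â), and achieves equality in the bound: xᵀ Â† x + tr(W Â)/‖y‖₂² = (2/‖y‖₂) √(xᵀ W x). Consequently the infimum over all positive semidefinite m×m matrices A with x ∈ range(A) of xᵀ A† x + tr(W A)/‖y‖₂² equals (2/‖y‖₂) √(xᵀ W x) and is attained at Â. -/

import Mathlib

/-!
Let `Y = ‖y‖₂²`. If `A = SᵀS` and `W = TᵀT` are PSD, `x = A u` and `ABA = A`, then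
`xᵀBx = ‖Su‖²`, `xᵀWx = ‖(TSᵀ)(Su)‖²` and `tr(WA) = ‖TSᵀ‖_F²`, so Cauchy–Schwarz gives
`xᵀWx ≤ (xᵀBx) tr(WA)`, and AM–GM turns this into `xᵀBx + tr(WA)/Y ≥ (2/√Y) √(xᵀWx)`.
For `Â = c xxᵀ` every such `B` has `xᵀBx = 1/c`, while `tr(WÂ) = c xᵀWx`; the choice
`c = √Y / √(xᵀWx)` makes the two terms equal, which is the equality case of AM–GM.
-/

open Matrix

/-- The four Penrose conditions: `B` is the Moore–Penrose pseudoinverse of `A`. -/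
def IsMoorePenrose {m n : Type*} [Fintype m] [Fintype n]
    (A : Matrix m n ℝ) (B : Matrix n m ℝ) : Prop :=
  A * B * A = A ∧ B * A * B = B ∧ (A * B)ᵀ = A * B ∧ (B * A)ᵀ = B * A

namespace Matrix

variable {ι : Type*} [Fintype ι]

theorem PosSemidef.exists_eq_transpose_mul_self {A : Matrix ι ι ℝ} (hA : A.PosSemidef) :
    ∃ S : Matrix ι ι ℝ, A = Sᵀ * S := by
  classical
  open scoped MatrixOrder in
  obtain ⟨S, rfl⟩ := CStarAlgebra.nonneg_iff_eq_star_mul_self.mp hA.nonneg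
  exact ⟨S, by rw [star_eq_conjTranspose, conjTranspose_eq_transpose_of_trivial]⟩

theorem PosSemidef.dotProduct_mulVec_pos_of_mulVec_ne_zero {W : Matrix ι ι ℝ}
    (hW : W.PosSemidef) {x : ι → ℝ} (hWx : W *ᵥ x ≠ 0) : 0 < x ⬝ᵥ W *ᵥ x := by
  refine (by simpa using hW.dotProduct_mulVec_nonneg x : (0 : ℝ) ≤ _).lt_of_ne' fun h => hWx ?_
  exact (hW.dotProduct_mulVec_zero_iff x).mp (by simpa using h)

theorem dotProduct_transpose_mul_self_mulVec (S : Matrix ι ι ℝ) (u : ι → ℝ) :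
    u ⬝ᵥ (Sᵀ * S) *ᵥ u = (S *ᵥ u) ⬝ᵥ (S *ᵥ u) := by
  rw [← mulVec_mulVec, dotProduct_mulVec, vecMul_transpose, dotProduct_comm]

theorem trace_transpose_mul_self_mul_transpose_mul_self (S T : Matrix ι ι ℝ) :
    (Tᵀ * T * (Sᵀ * S)).trace = (T * Sᵀ * (T * Sᵀ)ᵀ).trace := by
  rw [transpose_mul, transpose_transpose, mul_assoc, trace_mul_comm, ← mul_assoc, ← mul_assoc,
    mul_assoc]

theorem PosSemidef.trace_mul_nonneg {W A : Matrix ι ι ℝ} (hW : W.PosSemidef)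
    (hA : A.PosSemidef) : 0 ≤ (W * A).trace := by
  obtain ⟨S, rfl⟩ := hA.exists_eq_transpose_mul_self
  obtain ⟨T, rfl⟩ := hW.exists_eq_transpose_mul_self
  rw [trace_transpose_mul_self_mul_transpose_mul_self]
  simpa using (posSemidef_self_mul_conjTranspose (T * Sᵀ)).trace_nonneg

theorem dotProduct_mulVec_self_le_trace_mul_transpose {κ : Type*} [Fintype κ]
    (M : Matrix ι κ ℝ) (v : κ → ℝ) :
    (M *ᵥ v) ⬝ᵥ (M *ᵥ v) ≤ (M * Mᵀ).trace * (v ⬝ᵥ v) := by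
  simp only [dotProduct, trace, diag, mul_apply, transpose_apply, mulVec, Finset.sum_mul]
  exact Finset.sum_le_sum fun i _ => by
    simpa [sq, Finset.sum_mul] using Finset.sum_mul_sq_le_sq_mul_sq Finset.univ (M i) v

theorem dotProduct_mulVec_eq_of_mul_mul_eq {A B : Matrix ι ι ℝ} (hA : Aᵀ = A)
    (hABA : A * B * A = A) {u x : ι → ℝ} (hu : A *ᵥ u = x) :
    x ⬝ᵥ B *ᵥ x = u ⬝ᵥ x :=
  calc x ⬝ᵥ B *ᵥ x = (u ᵥ* A) ⬝ᵥ B *ᵥ (A *ᵥ u) := by rw [← mulVec_transpose, hA, hu]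
    _ = u ⬝ᵥ (A * B * A) *ᵥ u := by
      rw [← dotProduct_mulVec, mulVec_mulVec, mulVec_mulVec, mul_assoc]
    _ = u ⬝ᵥ x := by rw [hABA, hu]

theorem dotProduct_mulVec_nonneg_of_mul_mul_eq {A B : Matrix ι ι ℝ} (hA : A.PosSemidef)
    (hABA : A * B * A = A) {x : ι → ℝ} (hx : x ∈ Set.range A.mulVec) :
    0 ≤ x ⬝ᵥ B *ᵥ x := by
  obtain ⟨u, hu⟩ := hx
  rw [dotProduct_mulVec_eq_of_mul_mul_eq (by simpa using hA.isHermitian.eq) hABA hu, ← hu]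
  simpa using hA.dotProduct_mulVec_nonneg u

theorem dotProduct_mulVec_le_mul_trace {W A B : Matrix ι ι ℝ} (hW : W.PosSemidef)
    (hA : A.PosSemidef) (hABA : A * B * A = A) {x : ι → ℝ} (hx : x ∈ Set.range A.mulVec) :
    x ⬝ᵥ W *ᵥ x ≤ (x ⬝ᵥ B *ᵥ x) * (W * A).trace := by
  obtain ⟨u, hu⟩ := hx
  obtain ⟨S, rfl⟩ := hA.exists_eq_transpose_mul_self
  obtain ⟨T, rfl⟩ := hW.exists_eq_transpose_mul_self
  have hB : x ⬝ᵥ B *ᵥ x = (S *ᵥ u) ⬝ᵥ (S *ᵥ u) := by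
    rw [dotProduct_mulVec_eq_of_mul_mul_eq (by simp) hABA hu, ← hu,
      dotProduct_transpose_mul_self_mulVec]
  have hW : x ⬝ᵥ (Tᵀ * T) *ᵥ x = ((T * Sᵀ) *ᵥ (S *ᵥ u)) ⬝ᵥ ((T * Sᵀ) *ᵥ (S *ᵥ u)) := by
    rw [dotProduct_transpose_mul_self_mulVec, ← hu, mulVec_mulVec, mulVec_mulVec, mul_assoc]
  rw [hB, hW, trace_transpose_mul_self_mul_transpose_mul_self, mul_comm (_ ⬝ᵥ _)]
  exact dotProduct_mulVec_self_le_trace_mul_transpose _ _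

theorem vecMulVec_self_mul_self {R : Type*} [CommSemiring R] (x : ι → R) :
    vecMulVec x x * vecMulVec x x = (x ⬝ᵥ x) • vecMulVec x x := by
  rw [vecMulVec_mul_vecMulVec, vecMulVec_smul]

theorem smul_vecMulVec_self_mul_smul {R : Type*} [CommSemiring R] (a b : R) (x : ι → R) :
    (a • vecMulVec x x) * (b • vecMulVec x x) = (a * b * (x ⬝ᵥ x)) • vecMulVec x x := by
  rw [smul_mul_smul_comm, vecMulVec_self_mul_self, smul_smul]

theorem isMoorePenrose_smul_vecMulVec_self {a b : ℝ} {x : ι → ℝ}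
    (h : a * b * (x ⬝ᵥ x) ^ 2 = 1) :
    IsMoorePenrose (a • vecMulVec x x) (b • vecMulVec x x) := by
  refine ⟨?_, ?_, ?_, ?_⟩ <;>
    simp only [smul_vecMulVec_self_mul_smul, transpose_smul, transpose_vecMulVec]
  · congr 1; linear_combination a * h
  · congr 1; linear_combination b * h

theorem smul_vecMulVec_self_mulVec_inv_smul {c : ℝ} {x : ι → ℝ} (hc : c ≠ 0) (hx : x ≠ 0) :
    (c • vecMulVec x x) *ᵥ ((c * (x ⬝ᵥ x))⁻¹ • x) = x := by
  have hxx : x ⬝ᵥ x ≠ 0 := fun h => hx (dotProduct_self_eq_zero.mp h)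
  rw [smul_mulVec, mulVec_smul, vecMulVec_mulVec, smul_smul, op_smul_eq_smul, smul_smul]
  field_simp
  simp

theorem dotProduct_mulVec_eq_inv_of_smul_vecMulVec_self {c : ℝ} {x : ι → ℝ}
    {B : Matrix ι ι ℝ} (hc : c ≠ 0) (hx : x ≠ 0)
    (hB : c • vecMulVec x x * B * (c • vecMulVec x x) = c • vecMulVec x x) :
    x ⬝ᵥ B *ᵥ x = c⁻¹ := by
  have hxx : x ⬝ᵥ x ≠ 0 := fun h => hx (dotProduct_self_eq_zero.mp h)
  rw [dotProduct_mulVec_eq_of_mul_mul_eq (by simp [transpose_vecMulVec]) hB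
    (smul_vecMulVec_self_mulVec_inv_smul hc hx), smul_dotProduct, smul_eq_mul]
  field_simp

theorem trace_mul_smul_vecMulVec_self (W : Matrix ι ι ℝ) (c : ℝ) (x : ι → ℝ) :
    (W * (c • vecMulVec x x)).trace = c * (x ⬝ᵥ W *ᵥ x) := by
  rw [mul_smul_comm, trace_smul, mul_vecMulVec, trace_vecMulVec, dotProduct_comm, smul_eq_mul]

end Matrix

theorem two_div_sqrt_mul_sqrt_le_add_div {Y Q a t : ℝ} (hY : 0 < Y) (ha : 0 ≤ a) (ht : 0 ≤ t)
    (h : Q ≤ a * t) : 2 / √Y * √Q ≤ a + t / Y := by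
  have hsq : a + t / Y - 2 / √Y * (√a * √t) = (√a - √t / √Y) ^ 2 := by
    rw [← Real.sq_sqrt ha, ← Real.sq_sqrt ht, ← Real.sq_sqrt hY.le]
    simp only [Real.sqrt_sq (Real.sqrt_nonneg _)]
    field_simp
    ring
  calc 2 / √Y * √Q ≤ 2 / √Y * (√a * √t) := by
        rw [← Real.sqrt_mul ha]; gcongr
    _ ≤ a + t / Y := by nlinarith [sq_nonneg (√a - √t / √Y)]

/-- With `W x ≠ 0`, the matrix `Â = (‖y‖₂/√(xᵀWx)) x xᵀ` is PSD, has
`x ∈ range(Â)`, achieves `xᵀ Â† x + tr(W Â)/‖y‖₂² = (2/‖y‖₂)√(xᵀWx)`, and this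
value is the attained infimum over all PSD `A` with `x ∈ range(A)` of
`xᵀ A† x + tr(W A)/‖y‖₂²`. -/
theorem stmt15 {n m : ℕ} (y : Fin n → ℝ) (hy0 : y ≠ 0) (x : Fin m → ℝ)
    (W : Matrix (Fin m) (Fin m) ℝ) (hW : W.PosSemidef)
    (hWx : W.mulVec x ≠ 0) :
    ((Real.sqrt (y ⬝ᵥ y) / Real.sqrt (x ⬝ᵥ W.mulVec x)) •
        vecMulVec x x).PosSemidef ∧
    x ∈ Set.range (Matrix.mulVec
      ((Real.sqrt (y ⬝ᵥ y) / Real.sqrt (x ⬝ᵥ W.mulVec x)) • vecMulVec x x)) ∧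
    (∀ B : Matrix (Fin m) (Fin m) ℝ,
      IsMoorePenrose
        ((Real.sqrt (y ⬝ᵥ y) / Real.sqrt (x ⬝ᵥ W.mulVec x)) • vecMulVec x x) B →
      x ⬝ᵥ B.mulVec x +
          (W * ((Real.sqrt (y ⬝ᵥ y) / Real.sqrt (x ⬝ᵥ W.mulVec x)) •
            vecMulVec x x)).trace / (y ⬝ᵥ y) =
        2 / Real.sqrt (y ⬝ᵥ y) * Real.sqrt (x ⬝ᵥ W.mulVec x)) ∧
    IsLeast {r : ℝ | ∃ A B : Matrix (Fin m) (Fin m) ℝ, A.PosSemidef ∧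
        IsMoorePenrose A B ∧ x ∈ Set.range A.mulVec ∧
        r = x ⬝ᵥ B.mulVec x + (W * A).trace / (y ⬝ᵥ y)}
      (2 / Real.sqrt (y ⬝ᵥ y) * Real.sqrt (x ⬝ᵥ W.mulVec x)) := by
  have hY : 0 < y ⬝ᵥ y := by simpa using dotProduct_star_self_pos_iff.mpr hy0
  have hQ : 0 < x ⬝ᵥ W *ᵥ x := hW.dotProduct_mulVec_pos_of_mulVec_ne_zero hWx
  have hx : x ≠ 0 := by rintro rfl; simp at hWx
  set c := √(y ⬝ᵥ y) / √(x ⬝ᵥ W *ᵥ x) with hc_def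
  have hc : 0 < c := div_pos (Real.sqrt_pos.2 hY) (Real.sqrt_pos.2 hQ)
  have hpsd : (c • vecMulVec x x).PosSemidef := by
    simpa using (posSemidef_vecMulVec_self_star x).smul hc.le
  have hmem : x ∈ Set.range (c • vecMulVec x x).mulVec :=
    ⟨_, smul_vecMulVec_self_mulVec_inv_smul hc.ne' hx⟩
  have hpinv : IsMoorePenrose (c • vecMulVec x x) ((c * (x ⬝ᵥ x) ^ 2)⁻¹ • vecMulVec x x) :=
    isMoorePenrose_smul_vecMulVec_self (by field_simp [dotProduct_self_eq_zero.not.mpr hx])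
  have hvalue : ∀ B, IsMoorePenrose (c • vecMulVec x x) B →
      x ⬝ᵥ B *ᵥ x + (W * (c • vecMulVec x x)).trace / (y ⬝ᵥ y) =
        2 / √(y ⬝ᵥ y) * √(x ⬝ᵥ W *ᵥ x) := by
    intro B hB
    rw [dotProduct_mulVec_eq_inv_of_smul_vecMulVec_self hc.ne' hx hB.1,
      trace_mul_smul_vecMulVec_self, hc_def, ← Real.sq_sqrt hY.le, ← Real.sq_sqrt hQ.le]
    simp only [Real.sqrt_sq (Real.sqrt_nonneg _)]
    field_simp [(Real.sqrt_pos.2 hY).ne', (Real.sqrt_pos.2 hQ).ne']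
    ring
  refine ⟨hpsd, hmem, hvalue, ⟨_, _, hpsd, hpinv, hmem, (hvalue _ hpinv).symm⟩, ?_⟩
  rintro _ ⟨A, B, hA, hAB, hxA, rfl⟩
  exact two_div_sqrt_mul_sqrt_le_add_div hY (dotProduct_mulVec_nonneg_of_mul_mul_eq hA hAB.1 hxA)
    (hW.trace_mul_nonneg hA) (dotProduct_mulVec_le_mul_trace hW hA hAB.1 hxA)
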